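/- Let η, λ, β₆, δ₆ > 0, set ρ₁ = η/λ, ρ₆ = β₆/δ₆ and f∞ = ρ₁(1 − c_m)/(ρ₆ + ρ₁), let c_m ∈ (0,1) and let f̄₀ ∈ (0, 1 − c_m). Let f : [0,∞) → ℝ be continuously differentiable with f(0) = f̄₀, f(t) > 0 for all t ≥ 0, and f'(t) = −δ₆(ρ₆ + ρ₁) + δ₆ ρ₁ (1 − c_m)/f(t) for all t ≥ 0. Then lim_{t→∞} f(t) = f∞, and f∞ > 0. -/

import Mathlib

open Set Filter

private lemma key_ode_tendsto (a F f0 : ℝ) (ha : 0 < a) (hF : 0 < F) (hf0 : 0 < f0)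
    (f : ℝ → ℝ) (h0 : f 0 = f0) (hpos : ∀ t ∈ Set.Ici (0:ℝ), 0 < f t)
    (hder : ∀ t ∈ Set.Ici (0:ℝ), HasDerivWithinAt f (-a + a * F / f t) (Set.Ici 0) t) :
    Filter.Tendsto f Filter.atTop (nhds F) := by
  have hfc : ContinuousOn f (Set.Ici 0) := fun t ht => (hder t ht).continuousWithinAt
  set g : ℝ → ℝ := fun s => a / f (max s 0) with hg_def
  have hmax : Continuous fun s : ℝ => f (max s 0) :=
    hfc.comp_continuous (continuous_id.max continuous_const) (fun x => Set.mem_Ici.2 (le_max_right _ _))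
  have hfmaxpos : ∀ s : ℝ, 0 < f (max s 0) := fun s => hpos _ (Set.mem_Ici.2 (le_max_right _ _))
  have hgc : Continuous g := continuous_const.div hmax (fun s => (hfmaxpos s).ne')
  have hgpos : ∀ s, 0 < g s := fun s => div_pos ha (hfmaxpos s)
  set φ : ℝ → ℝ := fun t => ∫ s in (0:ℝ)..t, g s with hφ_def
  have hφd : ∀ t, HasDerivAt φ (g t) t := fun t =>
    intervalIntegral.integral_hasDerivAt_right (hgc.intervalIntegrable _ _)
      hgc.aestronglyMeasurable.stronglyMeasurableAtFilter hgc.continuousAt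
  have hφc : Continuous φ := by
    rw [continuous_iff_continuousAt]; exact fun t => (hφd t).continuousAt
  have hgeq : ∀ t ∈ Set.Ici (0:ℝ), g t = a / f t := by
    intro t ht; simp [hg_def, max_eq_left (Set.mem_Ici.1 ht)]
  have hφ0 : φ 0 = 0 := intervalIntegral.integral_same
  set G : ℝ → ℝ := fun t => (F - f t) * Real.exp (φ t) with hG_def
  have hGconst : ∀ t ∈ Set.Ici (0:ℝ), G t = F - f0 := by
    intro T hT
    have hcont : ContinuousOn G (Set.Icc 0 T) :=
      (continuousOn_const.sub (hfc.mono Set.Icc_subset_Ici_self)).mul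
        ((Real.continuous_exp.comp hφc).continuousOn)
    have hderiv : ∀ x ∈ Set.Ico (0:ℝ) T, HasDerivWithinAt G 0 (Set.Ici x) x := by
      intro x hx
      have hx0 : (0:ℝ) ≤ x := hx.1
      have hfx : 0 < f x := hpos x hx0
      have hfd : HasDerivWithinAt f (-a + a * F / f x) (Set.Ici x) x :=
        (hder x hx0).mono (Set.Ici_subset_Ici.2 hx0)
      have hed : HasDerivWithinAt (fun t => Real.exp (φ t)) (Real.exp (φ x) * g x)
          (Set.Ici x) x := ((hφd x).hasDerivWithinAt).exp
      have hGd := ((hasDerivWithinAt_const x (Set.Ici x) F).sub hfd).mul hed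
      have hval : (0 - (-a + a * F / f x)) * Real.exp (φ x) +
          (F - f x) * (Real.exp (φ x) * g x) = 0 := by
        rw [hgeq x hx0]
        field_simp
        ring
      simp only [Pi.sub_apply] at hGd
      rw [hval] at hGd
      exact hGd
    have := constant_of_has_deriv_right_zero hcont hderiv T (Set.right_mem_Icc.2 hT)
    simpa [hG_def, h0, hφ0] using this
  have hform : ∀ t ∈ Set.Ici (0:ℝ), F - f t = (F - f0) * Real.exp (-φ t) := by
    intro t ht
    have h1 := hGconst t ht
    have hE : Real.exp (φ t) ≠ 0 := (Real.exp_pos _).ne'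
    rw [Real.exp_neg]
    simp only [hG_def] at h1
    field_simp
    linarith [h1]
  have hφnn : ∀ t ∈ Set.Ici (0:ℝ), 0 ≤ φ t := by
    intro t ht
    exact intervalIntegral.integral_nonneg ht (fun s _ => (hgpos s).le)
  set M : ℝ := max f0 F with hM_def
  have hM : 0 < M := lt_of_lt_of_le hf0 (le_max_left _ _)
  have hfle : ∀ t ∈ Set.Ici (0:ℝ), f t ≤ M := by
    intro t ht
    have h1 := hform t ht
    have hE1 : Real.exp (-φ t) ≤ 1 := Real.exp_le_one_iff.2 (neg_nonpos.2 (hφnn t ht))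
    have hEpos : 0 < Real.exp (-φ t) := Real.exp_pos _
    rcases le_total f0 F with h | h
    · have : 0 ≤ F - f t := h1 ▸ mul_nonneg (by linarith) hEpos.le
      have : f t ≤ F := by linarith
      exact this.trans (le_max_right _ _)
    · have : f t ≤ f0 := by nlinarith [mul_nonneg (sub_nonneg.2 h) (sub_nonneg.2 hE1)]
      exact this.trans (le_max_left _ _)
  have hφlb : ∀ t ∈ Set.Ici (0:ℝ), a / M * t ≤ φ t := by
    intro t ht
    have hmono : ∫ s in (0:ℝ)..t, (a / M) ≤ ∫ s in (0:ℝ)..t, g s := by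
      apply intervalIntegral.integral_mono_on ht intervalIntegrable_const
        (hgc.intervalIntegrable _ _)
      intro s hs
      have hs0 : (0:ℝ) ≤ max s 0 := le_max_right _ _
      have hfs : f (max s 0) ≤ M := hfle _ hs0
      calc a / M ≤ a / f (max s 0) := by gcongr; exact hfmaxpos s
        _ = g s := rfl
    have : ∫ s in (0:ℝ)..t, (a / M) = a / M * t := by
      simp [intervalIntegral.integral_const, smul_eq_mul]
      ring
    linarith [hmono, this.symm.le]
  have hbound : ∀ᶠ t in Filter.atTop, ‖f t - F‖ ≤ |F - f0| * Real.exp (-(a / M) * t) := by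
    filter_upwards [Filter.eventually_ge_atTop (0:ℝ)] with t ht
    have h1 := hform t ht
    have h2 : |f t - F| = |F - f0| * Real.exp (-φ t) := by
      rw [abs_sub_comm, h1, abs_mul, abs_of_pos (Real.exp_pos _)]
    rw [Real.norm_eq_abs, h2]
    have : Real.exp (-φ t) ≤ Real.exp (-(a / M) * t) :=
      Real.exp_le_exp.2 (by have := hφlb t ht; linarith)
    exact mul_le_mul_of_nonneg_left this (abs_nonneg _)
  have hlim : Filter.Tendsto (fun t => |F - f0| * Real.exp (-(a / M) * t))
      Filter.atTop (nhds 0) := by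
    have h1 : Filter.Tendsto (fun t : ℝ => (a / M) * t) Filter.atTop Filter.atTop :=
      Filter.Tendsto.const_mul_atTop (div_pos ha hM) Filter.tendsto_id
    have h3 : Filter.Tendsto (fun t : ℝ => Real.exp (-(a / M * t))) Filter.atTop (nhds 0) :=
      Real.tendsto_exp_neg_atTop_nhds_zero.comp h1
    have h4 := h3.const_mul (|F - f0|)
    simpa [neg_mul] using h4
  have := squeeze_zero_norm' hbound hlim
  have h4 := this.add_const F
  simpa using h4

/-- `IsSolutionFreePoly δ6 ρ6 ρ1 cm f0 f` means that `f` is a positive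
(continuously differentiable) solution on `[0,∞)` of the ODE
`f' = −δ₆(ρ₆ + ρ₁) + δ₆ ρ₁ (1 − c_m)/f` with initial condition `f(0) = f₀`. -/
def IsSolutionFreePoly (δ6 ρ6 ρ1 cm f0 : ℝ) (f : ℝ → ℝ) : Prop :=
  f 0 = f0 ∧ (∀ t ∈ Set.Ici (0 : ℝ), 0 < f t) ∧
  ∀ t ∈ Set.Ici (0 : ℝ),
    HasDerivWithinAt f (-δ6 * (ρ6 + ρ1) + δ6 * ρ1 * (1 - cm) / f t) (Set.Ici 0) t

/-- Convergence to the equilibrium: the solution of the ODE of Theorem 5.1 of the paper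
converges at infinity to `f∞ = ρ₁(1 − c_m)/(ρ₆ + ρ₁)`, which is strictly positive. -/
theorem free_poly_ode_tendsto_equilibrium (η lam β6 δ6 cm f0 : ℝ)
    (hη : 0 < η) (hlam : 0 < lam) (hβ6 : 0 < β6) (hδ6 : 0 < δ6)
    (hcm : cm ∈ Set.Ioo (0 : ℝ) 1) (hf0 : f0 ∈ Set.Ioo (0 : ℝ) (1 - cm))
    (f : ℝ → ℝ) (hsol : IsSolutionFreePoly δ6 (β6 / δ6) (η / lam) cm f0 f) :
    Filter.Tendsto f Filter.atTop
      (nhds ((η / lam) * (1 - cm) / (β6 / δ6 + η / lam))) ∧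
    0 < (η / lam) * (1 - cm) / (β6 / δ6 + η / lam) := by
  obtain ⟨h0, hpos, hder⟩ := hsol
  set ρ1 : ℝ := η / lam with hρ1
  set ρ6 : ℝ := β6 / δ6 with hρ6
  have hρ1p : 0 < ρ1 := div_pos hη hlam
  have hρ6p : 0 < ρ6 := div_pos hβ6 hδ6
  have hcm1 : 0 < 1 - cm := by linarith [hcm.2]
  set a : ℝ := δ6 * (ρ6 + ρ1) with ha_def
  set F : ℝ := ρ1 * (1 - cm) / (ρ6 + ρ1) with hF_def
  have ha : 0 < a := mul_pos hδ6 (by linarith)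
  have hF : 0 < F := div_pos (mul_pos hρ1p hcm1) (by linarith)
  have hbF : δ6 * ρ1 * (1 - cm) = a * F := by
    rw [ha_def, hF_def]
    field_simp
  refine ⟨?_, hF⟩
  apply key_ode_tendsto a F f0 ha hF hf0.1 f h0 hpos
  intro t ht
  have := hder t ht
  have heq : -δ6 * (ρ6 + ρ1) + δ6 * ρ1 * (1 - cm) / f t = -a + a * F / f t := by
    rw [hbF, ha_def]; ring
  rwa [heq] at this
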